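/- arXiv:1205.1358 — 2 statements merged into one kernel-verified Lean document; each statement's English description precedes it below -/
import Mathlib

section
/- Let 𝒞 be the class of directed graphs (structures with one binary relation E) in which every vertex has in-degree at most 1 and out-degree at most 1 and there is no directed cycle of any length (i.e., disjoint unions of oriented paths). Then for every B ∈ ℕ, an FO sentence φ with φ ∈ PSC(B) is equivalent over 𝒞 to a sentence of the form ∃x₁…∃x_B ∀y₁…∀y_n β with β quantifier-free. -/
open FirstOrder Language

universe u v

namespace Stmt

variable {L : FirstOrder.Language.{u, v}}

/-- Universally quantify the last `k` bound variables of a bounded formula. -/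
def allsK {n : ℕ} : (k : ℕ) → L.BoundedFormula Empty (n + k) → L.BoundedFormula Empty n
  | 0, φ => φ
  | k + 1, φ => allsK k φ.all

/-- Existentially quantify the last `k` bound variables of a bounded formula. -/
def exsK {n : ℕ} : (k : ℕ) → L.BoundedFormula Empty (n + k) → L.BoundedFormula Empty n
  | 0, φ => φ
  | k + 1, φ => exsK k φ.ex

/-- The Σ⁰₂ sentence `∃x₁…x_B ∀y₁…y_n β` (for `β` quantifier-free). -/
def sigma2 (B n : ℕ) (β : L.BoundedFormula Empty (B + n)) : L.Sentence :=
  (allsK n β).exs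

/-- The Π⁰₂ sentence `∀x₁…x_k ∃y₁…y_m β` (for `β` quantifier-free). -/
def pi2 (k m : ℕ) (β : L.BoundedFormula Empty (k + m)) : L.Sentence :=
  (exsK m β).alls

/-- `C` is a core of the structure `M` w.r.t. `φ`: every (nonempty) substructure of `M`
whose universe contains `C` satisfies `φ`. -/
def IsCore (φ : L.Sentence) (M : Type max u v) [L.Structure M] (C : Set M) : Prop :=
  ∀ N : L.Substructure M, C ⊆ (N : Set M) → Nonempty N → ↥N ⊨ φ

/-- `φ` is preserved under substructures modulo a finite core: every model of `φ`
has a finite core w.r.t. `φ`. -/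
def PSCf (φ : L.Sentence) : Prop :=
  ∀ (M : Type max u v) [L.Structure M] [Nonempty M],
    M ⊨ φ → ∃ C : Set M, C.Finite ∧ IsCore φ M C

/-- `φ ∈ PSC(B)`: every model of `φ` has a core of size at most `B` w.r.t. `φ`. -/
def PSC (φ : L.Sentence) (B : ℕ) : Prop :=
  ∀ (M : Type max u v) [L.Structure M] [Nonempty M],
    M ⊨ φ → ∃ C : Finset M, C.card ≤ B ∧ IsCore φ M ↑C

/-- Logical equivalence of sentences: they hold in exactly the same (nonempty) structures. -/
def Equiv (φ ψ : L.Sentence) : Prop :=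
  ∀ (M : Type max u v) [L.Structure M] [Nonempty M], M ⊨ φ ↔ M ⊨ ψ

/-- The edge relation of a structure for the language with a single binary relation. -/
abbrev E (M : Type) [Language.graph.Structure M] (x y : M) : Prop :=
  Structure.RelMap Language.adj ![x, y]

/-- Membership in the class 𝒞 of directed graphs in which every vertex has in-degree at most 1
and out-degree at most 1 and there is no directed cycle of any length (i.e. disjoint unions of
oriented paths). -/
def InDirPaths (M : Type) [Language.graph.Structure M] : Prop :=
  (∀ x y z : M, E M x z → E M y z → x = y) ∧
  (∀ x y z : M, E M x y → E M x z → y = z) ∧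
  ∀ (m : ℕ) (f : Fin (m + 1) → M), ¬ ∀ i, E M (f i) (f (i + 1))

/-!
Let `M ⊨ φ`, let `Mω` be its ultrapower over a non-principal ultrafilter on `ℕ`, and let the
tuple `c` enumerate a core of `Mω`. Suppose no existential formula `u` false at `c` has
`∃ x, ¬ u x` entailing `φ`. Then, by compactness (an ultraproduct of counterexamples followed by
Löwenheim–Skolem), there is a countable `V ⊭ φ` with a tuple `a` whose existential type is
contained in that of `c`. Since `Mω` is countably saturated, a forth construction embeds `V` into
`Mω` sending `a` to `c`. The image contains the core, so it satisfies `φ`, and so does `V`: a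
contradiction. Hence every model of `φ` satisfies some `Σ₂` sentence `∃ x, ¬ u x` entailing `φ`;
by compactness finitely many of them suffice, and their disjunction has the same shape.
-/

open Filter

theorem realize_allsK {M : Type*} [L.Structure M] (k : ℕ) {n : ℕ}
    (φ : L.BoundedFormula Empty (n + k)) (v : Empty → M) (xs : Fin n → M) :
    (allsK k φ).Realize v xs ↔ ∀ ys : Fin k → M, φ.Realize v (Fin.append xs ys) := by
  induction k with
  | zero => simp [allsK, Fin.append_right_nil _ _ rfl]
  | succ k ih =>
    simp only [allsK, ih, BoundedFormula.realize_all, ← Fin.append_snoc]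
    exact ⟨fun h ys => Fin.snoc_init_self ys ▸ h _ _, fun h ys a => h _⟩

theorem realize_sigma2 {M : Type*} [L.Structure M] [Nonempty M] {B n : ℕ}
    (β : L.BoundedFormula Empty (B + n)) :
    M ⊨ sigma2 B n β ↔ ∃ xs : Fin B → M, ∀ ys : Fin n → M, β.Realize default (Fin.append xs ys) :=
  BoundedFormula.realize_exs.trans (exists_congr fun xs => realize_allsK n β default xs)

def boundAll {a b : ℕ} (φ : L.Formula (Fin a ⊕ Fin b)) : L.BoundedFormula Empty (a + b) :=
  BoundedFormula.relabel (β := Empty) (Sum.inr ∘ finSumFinEquiv) φ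

theorem isQF_boundAll {a b : ℕ} {φ : L.Formula (Fin a ⊕ Fin b)} (hφ : φ.IsQF) :
    (boundAll φ).IsQF :=
  hφ.relabel _

theorem realize_boundAll {M : Type*} [L.Structure M] {a b : ℕ} (φ : L.Formula (Fin a ⊕ Fin b))
    (v : Empty → M) (xs : Fin a → M) (ys : Fin b → M) :
    (boundAll φ).Realize v (Fin.append xs ys) ↔ φ.Realize (Sum.elim xs ys) := by
  rw [boundAll, BoundedFormula.realize_relabel, Formula.Realize]
  convert Iff.rfl using 2
  ext (i | i) <;> simp

theorem append_comp_castAdd {M : Type*} {a b : ℕ} (w₁ : Fin a → M) (w₂ : Fin b → M) :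
    Fin.append w₁ w₂ ∘ Fin.castAdd b = w₁ := by
  ext; simp

theorem append_comp_natAdd {M : Type*} {a b : ℕ} (w₁ : Fin a → M) (w₂ : Fin b → M) :
    Fin.append w₁ w₂ ∘ Fin.natAdd a = w₂ := by
  ext; simp

/-- `∃ w₁ … wₙ, matrix` with `matrix` quantifier-free. Unlike `BoundedFormula.IsExistential`,
this prenex presentation is closed under `∧`, `∨` and `∃` on the nose. -/
structure ExForm (L : FirstOrder.Language.{u, v}) (α : Type*) where
  n : ℕ
  matrix : L.Formula (α ⊕ Fin n)
  isQF : matrix.IsQF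

namespace ExForm

variable {α : Type*} {M : Type*} [L.Structure M]

def Realize (p : ExForm L α) (x : α → M) : Prop :=
  ∃ w : Fin p.n → M, p.matrix.Realize (Sum.elim x w)

noncomputable def toFormula (p : ExForm L α) : L.Formula α :=
  p.matrix.iExs (Fin p.n)

theorem realize_toFormula (p : ExForm L α) (x : α → M) : p.toFormula.Realize x ↔ p.Realize x :=
  Formula.realize_iExs

def ofQF (φ : L.Formula α) (hφ : φ.IsQF) : ExForm L α :=
  ⟨0, φ.relabel Sum.inl, hφ.relabel _⟩

theorem realize_ofQF {φ : L.Formula α} (hφ : φ.IsQF) (x : α → M) :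
    (ofQF φ hφ).Realize x ↔ φ.Realize x := by
  simp [ofQF, Realize]

def and (p q : ExForm L α) : ExForm L α :=
  ⟨p.n + q.n, p.matrix.relabel (Sum.map id (Fin.castAdd q.n)) ⊓
    q.matrix.relabel (Sum.map id (Fin.natAdd p.n)), (p.isQF.relabel _).inf (q.isQF.relabel _)⟩

theorem realize_and (p q : ExForm L α) (x : α → M) :
    (p.and q).Realize x ↔ p.Realize x ∧ q.Realize x := by
  simp only [and, Realize, Formula.realize_inf, Formula.realize_relabel, Sum.elim_comp_map,
    Function.comp_id]
  constructor
  · rintro ⟨w, hp, hq⟩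
    exact ⟨⟨_, hp⟩, _, hq⟩
  · rintro ⟨⟨w₁, h₁⟩, w₂, h₂⟩
    exact ⟨Fin.append w₁ w₂, by rwa [append_comp_castAdd], by rwa [append_comp_natAdd]⟩

def or (p q : ExForm L α) : ExForm L α :=
  ⟨p.n + q.n, p.matrix.relabel (Sum.map id (Fin.castAdd q.n)) ⊔
    q.matrix.relabel (Sum.map id (Fin.natAdd p.n)), (p.isQF.relabel _).sup (q.isQF.relabel _)⟩

theorem realize_or [Nonempty M] (p q : ExForm L α) (x : α → M) :
    (p.or q).Realize x ↔ p.Realize x ∨ q.Realize x := by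
  simp only [or, Realize, Formula.realize_sup, Formula.realize_relabel, Sum.elim_comp_map,
    Function.comp_id]
  constructor
  · rintro ⟨w, hp | hq⟩
    exacts [Or.inl ⟨_, hp⟩, Or.inr ⟨_, hq⟩]
  · rintro (⟨w₁, h⟩ | ⟨w₂, h⟩)
    · exact ⟨Fin.append w₁ (Classical.arbitrary _), Or.inl (by rwa [append_comp_castAdd])⟩
    · exact ⟨Fin.append (Classical.arbitrary _) w₂, Or.inr (by rwa [append_comp_natAdd])⟩

noncomputable def listAnd (l : List (ExForm L α)) : ExForm L α :=
  l.foldr and (ofQF ⊤ BoundedFormula.IsQF.top)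

theorem realize_listAnd (l : List (ExForm L α)) (x : α → M) :
    (listAnd l).Realize x ↔ ∀ p ∈ l, p.Realize x := by
  induction l with
  | nil => simp [listAnd, realize_ofQF]
  | cons p l ih => simp [listAnd, realize_and, ← ih]

noncomputable def listOr (l : List (ExForm L α)) : ExForm L α :=
  l.foldr or (ofQF ⊥ BoundedFormula.isQF_bot)

theorem realize_listOr [Nonempty M] (l : List (ExForm L α)) (x : α → M) :
    (listOr l).Realize x ↔ ∃ p ∈ l, p.Realize x := by
  induction l with
  | nil => simp [listOr, realize_ofQF]
  | cons p l ih => simp [listOr, realize_or, ← ih]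

def exLast {m : ℕ} (p : ExForm L (Fin (m + 1))) : ExForm L (Fin m) :=
  ⟨p.n + 1, p.matrix.relabel
    (Sum.elim (Fin.lastCases (Sum.inr 0) Sum.inl) (Sum.inr ∘ Fin.succ)), p.isQF.relabel _⟩

theorem realize_exLast {m : ℕ} (p : ExForm L (Fin (m + 1))) (x : Fin m → M) :
    p.exLast.Realize x ↔ ∃ a, p.Realize (Fin.snoc x a) := by
  simp only [exLast, Realize, Formula.realize_relabel, Fin.exists_fin_succ_pi]
  refine exists_congr fun a => exists_congr fun w => iff_of_eq (congrArg _ ?_)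
  ext (i | j)
  · induction i using Fin.lastCases <;> simp
  · simp

instance [Countable α] [Countable L.Symbols] : Countable (ExForm L α) :=
  Function.Injective.countable (f := fun p : ExForm L α => (⟨p.n, p.matrix⟩ :
    Σ n, L.Formula (α ⊕ Fin n))) fun ⟨_, _, _⟩ ⟨_, _, _⟩ h => by cases h; rfl

theorem realize_comp_elementaryEmbedding {N : Type*} [L.Structure N] (f : M ↪ₑ[L] N)
    (p : ExForm L α) (x : α → M) : p.Realize (f ∘ x) ↔ p.Realize x := by
  rw [← realize_toFormula, ← realize_toFormula, f.map_formula]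

def existsNot {B : ℕ} (u : ExForm L (Fin B)) : L.Sentence :=
  sigma2 B u.n (boundAll u.matrix.not)

theorem realize_existsNot [Nonempty M] {B : ℕ} (u : ExForm L (Fin B)) :
    M ⊨ u.existsNot ↔ ∃ xs : Fin B → M, ¬ u.Realize xs := by
  simp [existsNot, realize_sigma2, realize_boundAll, Realize]

end ExForm

def ExTypeLE (L : FirstOrder.Language.{u, v}) {α M N : Type*} [L.Structure M] [L.Structure N]
    (x : α → M) (y : α → N) : Prop :=
  ∀ p : ExForm L α, p.Realize x → p.Realize y

theorem exists_seq_forall_prefix {Y : Type*} (P : ∀ k, (Fin k → Y) → Prop) (h₀ : P 0 Fin.elim0)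
    (hstep : ∀ k F, P k F → ∃ y, P (k + 1) (Fin.snoc F y)) :
    ∃ F : ℕ → Y, ∀ k, P k fun i => F i := by
  obtain ⟨y₀, -⟩ := hstep 0 _ h₀
  have : Nonempty Y := ⟨y₀⟩
  have hupdate (k : ℕ) (G : ℕ → Y) (hG : P k fun i => G i) :
      ∃ y, P (k + 1) fun i => Function.update G k y i := by
    obtain ⟨y, hy⟩ := hstep k _ hG
    refine ⟨y, ?_⟩
    convert hy using 2 with i
    induction i using Fin.lastCases <;> simp [Function.update, Fin.snoc, ne_of_lt]
  choose! next hnext using hupdate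
  let G (k : ℕ) : ℕ → Y := Nat.rec (fun _ => y₀) (fun k Gk => Function.update Gk k (next k Gk)) k
  have hG (k : ℕ) : P k fun i => G k i := by
    induction k with
    | zero => convert h₀
    | succ k ih => exact hnext k (G k) ih
  have hstable (k i : ℕ) (hi : i < k) : G k i = G (i + 1) i := by
    induction k with
    | zero => omega
    | succ k ih =>
      rcases Nat.lt_succ_iff_lt_or_eq.1 hi with hi | rfl
      · exact (Function.update_of_ne hi.ne _ _).trans (ih hi)
      · rfl
  exact ⟨fun i => G (i + 1) i, fun k => by simpa [hstable k _ (Fin.is_lt _)] using hG k⟩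

section Embedding

variable {V K : Type*} [L.Structure V] [L.Structure K]

theorem ExTypeLE.realize_iff_of_isQF {α : Type*} {x : α → V} {y : α → K} (h : ExTypeLE L x y)
    {φ : L.Formula α} (hφ : φ.IsQF) : φ.Realize x ↔ φ.Realize y := by
  have key (ψ : L.Formula α) (hψ : ψ.IsQF) : ψ.Realize x → ψ.Realize y := fun hx =>
    (ExForm.realize_ofQF hψ y).1 (h _ ((ExForm.realize_ofQF hψ x).2 hx))
  exact ⟨key φ hφ, fun hy => by_contra fun hx => key φ.not hφ.not hx hy⟩

theorem realize_iff_of_forall_exTypeLE {B : ℕ} {a : Fin B → V} {c : Fin B → K} {e : ℕ → V}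
    {F : ℕ → K}
    (h : ∀ k, ExTypeLE L (Fin.append a fun i : Fin k => e i) (Fin.append c fun i => F i))
    {n : ℕ} {φ : L.Formula (Fin B ⊕ Fin n)} (hφ : φ.IsQF) (t : Fin n → ℕ) :
    φ.Realize (Sum.elim a (e ∘ t)) ↔ φ.Realize (Sum.elim c (F ∘ t)) := by
  have ht (i : Fin n) : t i < Finset.univ.sup t + 1 :=
    Nat.lt_succ_of_le (Finset.le_sup (Finset.mem_univ i))
  let r : Fin B ⊕ Fin n → Fin (B + (Finset.univ.sup t + 1)) :=
    Sum.elim (Fin.castAdd _) fun i => Fin.natAdd B ⟨t i, ht i⟩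
  have hr := (h _).realize_iff_of_isQF (φ := φ.relabel r) (hφ.relabel _)
  simp only [Formula.realize_relabel] at hr
  convert hr using 2 <;> ext (i | i) <;>
    simp only [r, Function.comp_apply, Sum.elim_inl, Sum.elim_inr, Fin.append_left,
      Fin.append_right]

theorem exists_embedding_of_realize_iff {B : ℕ} {a : Fin B → V} {c : Fin B → K} {e : ℕ → V}
    (he : Function.Surjective e) {F : ℕ → K}
    (H : ∀ {n} (φ : L.Formula (Fin B ⊕ Fin n)), φ.IsQF → ∀ t : Fin n → ℕ,
      φ.Realize (Sum.elim a (e ∘ t)) ↔ φ.Realize (Sum.elim c (F ∘ t))) :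
    ∃ g : V ↪[L] K, g ∘ a = c := by
  let idx := Function.surjInv he
  have hidx : ∀ x, e (idx x) = x := Function.surjInv_eq he
  have H_equal {n : ℕ} (s₁ s₂ : L.Term (Fin B ⊕ Fin n)) (t : Fin n → ℕ) :=
    H (s₁.equal s₂) (BoundedFormula.IsAtomic.equal _ _).isQF t
  refine ⟨⟨⟨F ∘ idx, fun x y hxy => ?_⟩, fun f x => ?_, fun r x => ?_⟩, funext fun i => ?_⟩
  · simpa [hidx] using
      (H_equal (.var (.inr 0)) (.var (.inr 1)) ![idx x, idx y]).2 (by simpa using hxy)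
  · simpa [hidx, Function.comp_def, eq_comm] using
      (H_equal (.func f fun i => .var (.inr i.castSucc)) (.var (.inr (Fin.last _)))
        (Fin.snoc (idx ∘ x) (idx (Structure.funMap f x)))).1 (by simp [hidx, Function.comp_def])
  · simpa [hidx, Function.comp_def] using
      (H (r.formula fun i => .var (.inr i)) (BoundedFormula.IsAtomic.rel _ _).isQF (idx ∘ x)).symm
  · show F (idx (a i)) = c i
    simpa [hidx] using (H_equal (.var (.inr 0)) (.var (.inl i)) ![idx (a i)]).1 (by simp [hidx])

end Embedding

section Ultraproduct

variable {Ms : ℕ → Type*} [∀ i, L.Structure (Ms i)] [∀ i, Nonempty (Ms i)] {U : Ultrafilter ℕ}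

theorem Ultraproduct.exists_forall_realize (hU : (U : Filter ℕ) ≤ cofinite) {α β : Type*}
    [Finite β] (x : α → (U : Filter ℕ).Product Ms) (φ : ℕ → L.Formula (α ⊕ β))
    (h : ∀ j, ∃ y : β → (U : Filter ℕ).Product Ms, ∀ j' ≤ j, (φ j').Realize (Sum.elim x y)) :
    ∃ y : β → (U : Filter ℕ).Product Ms, ∀ j, (φ j).Realize (Sum.elim x y) := by
  classical
  choose xr hxr using fun a => Quotient.exists_rep (x a)
  obtain rfl : x = fun a => ((xr a : ∀ i, Ms i) : (U : Filter ℕ).Product Ms) :=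
    funext fun a => (hxr a).symm
  let ψ (j : ℕ) : L.Formula α := Formula.iExs β (Formula.iInf fun j' : Fin (j + 1) => φ j')
  let A (j : ℕ) : Set ℕ := {i | (ψ j).Realize fun a => xr a i}
  have hA (j : ℕ) : A j ∈ U := by
    refine (Ultraproduct.realize_formula_cast (ψ j) xr).1 ?_
    obtain ⟨y, hy⟩ := h j
    simp only [ψ, Formula.realize_iExs, Formula.realize_iInf]
    exact ⟨y, fun j' => hy j' (Nat.le_of_lt_succ j'.2)⟩
  -- At coordinate `i`, realize the first `J i + 1` formulas, with `J i ≤ i` as large as possible.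
  let J (i : ℕ) : ℕ := Nat.findGreatest (fun j => i ∈ A j) i
  have hy (i : ℕ) : ∃ y : β → Ms i,
      i ∈ A (J i) → ∀ j ≤ J i, (φ j).Realize (Sum.elim (fun a => xr a i) y) := by
    by_cases hi : i ∈ A (J i)
    · simp only [A, ψ, Set.mem_ofPred_eq, Formula.realize_iExs, Formula.realize_iInf] at hi
      obtain ⟨y, hy⟩ := hi
      exact ⟨y, fun _ j hj => hy ⟨j, Nat.lt_succ_of_le hj⟩⟩
    · exact ⟨Classical.arbitrary _, fun h => absurd h hi⟩
  choose yr hyr using hy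
  have hcoord (i : ℕ) : (fun c => Sum.elim xr (fun b i => yr i b) c i) =
      Sum.elim (fun a => xr a i) (yr i) := by
    ext (a | b) <;> rfl
  refine ⟨fun b => ((fun i => yr i b : ∀ i, Ms i) : (U : Filter ℕ).Product Ms), fun j => ?_⟩
  have hj : ∀ᶠ i in (U : Filter ℕ), j ≤ i :=
    hU (by rw [Nat.cofinite_eq_atTop]; exact eventually_ge_atTop j)
  have hreal := (Ultraproduct.realize_formula_cast (φ j) (Sum.elim xr fun b i => yr i b)).2
    (Filter.mem_of_superset (Filter.inter_mem (hA j) hj) fun i ⟨hiA, hji⟩ => by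
      show (φ j).Realize fun c => Sum.elim xr (fun b i => yr i b) c i
      rw [hcoord]
      exact hyr i (Nat.findGreatest_spec (P := fun j => i ∈ A j) hji hiA) j
        (Nat.le_findGreatest hji hiA))
  refine (iff_of_eq (congrArg _ ?_)).2 hreal
  ext (a | b) <;> rfl

variable {V : Type*} [L.Structure V] [Countable L.Symbols]

theorem ExTypeLE.exists_snoc (hU : (U : Filter ℕ) ≤ cofinite) {m : ℕ} {x : Fin m → V}
    {y : Fin m → (U : Filter ℕ).Product Ms} (h : ExTypeLE L x y) (a : V) :
    ∃ b, ExTypeLE L (Fin.snoc x a) (Fin.snoc y b) := by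
  obtain ⟨q, hq⟩ := (Set.to_countable {p : ExForm L (Fin (m + 1)) | p.Realize (Fin.snoc x a)}
    ).exists_eq_range ⟨.ofQF ⊤ BoundedFormula.IsQF.top, by simp [ExForm.realize_ofQF]⟩
  have hqx (j : ℕ) : (q j).Realize (Fin.snoc x a) := by
    have hj := Set.mem_range_self (f := q) j
    rwa [← hq] at hj
  let φ (j : ℕ) : L.Formula (Fin m ⊕ Fin 1) :=
    (q j).toFormula.relabel (Fin.lastCases (Sum.inr 0) Sum.inl)
  have hφ (j : ℕ) (b : Fin 1 → (U : Filter ℕ).Product Ms) :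
      (φ j).Realize (Sum.elim y b) ↔ (q j).Realize (Fin.snoc y (b 0)) := by
    rw [Formula.realize_relabel, ExForm.realize_toFormula]
    convert Iff.rfl using 2
    ext i
    induction i using Fin.lastCases <;> simp
  have hfin (j : ℕ) : ∃ b : Fin 1 → (U : Filter ℕ).Product Ms,
      ∀ j' ≤ j, (φ j').Realize (Sum.elim y b) := by
    let ψ := ExForm.listAnd ((List.range (j + 1)).map q)
    have hψ : ψ.exLast.Realize x := (ExForm.realize_exLast ψ x).2
      ⟨a, (ExForm.realize_listAnd _ _).2 fun p hp => by
        obtain ⟨j', -, rfl⟩ := List.mem_map.1 hp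
        exact hqx j'⟩
    obtain ⟨b, hb⟩ := (ExForm.realize_exLast ψ y).1 (h _ hψ)
    refine ⟨fun _ => b, fun j' hj' => (hφ j' _).2 ?_⟩
    exact (ExForm.realize_listAnd _ _).1 hb _
      (List.mem_map.2 ⟨j', List.mem_range.2 (Nat.lt_succ_of_le hj'), rfl⟩)
  obtain ⟨b, hb⟩ := Ultraproduct.exists_forall_realize hU y φ hfin
  refine ⟨b 0, fun p hp => ?_⟩
  obtain ⟨j, rfl⟩ : p ∈ Set.range q := hq ▸ hp
  exact (hφ j b).1 (hb j)

theorem exists_embedding_ultraproduct (hU : (U : Filter ℕ) ≤ cofinite) [Countable V] [Nonempty V]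
    {B : ℕ} {a : Fin B → V} {c : Fin B → (U : Filter ℕ).Product Ms} (h : ExTypeLE L a c) :
    ∃ g : V ↪[L] (U : Filter ℕ).Product Ms, g ∘ a = c := by
  obtain ⟨e, he⟩ := exists_surjective_nat V
  obtain ⟨F, hF⟩ := exists_seq_forall_prefix
    (fun k F => ExTypeLE L (Fin.append a fun i : Fin k => e i) (Fin.append c F))
    (by simpa [Fin.append_right_nil _ _ rfl] using h) fun k F hkF => by
      obtain ⟨b, hb⟩ := hkF.exists_snoc hU (e k)
      refine ⟨b, ?_⟩
      have hsnoc : (fun i : Fin (k + 1) => e i) = Fin.snoc (fun i : Fin k => e i) (e k) := by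
        ext i
        induction i using Fin.lastCases <;> simp
      rwa [hsnoc, Fin.append_snoc, Fin.append_snoc]
  exact exists_embedding_of_realize_iff he fun φ hφ t => realize_iff_of_forall_exTypeLE hF hφ t

end Ultraproduct

theorem exists_countable_elementarySubstructure [Countable L.Symbols] {M : Type*}
    [L.Structure M] {s : Set M} (hs : s.Countable) :
    ∃ S : L.ElementarySubstructure M, s ⊆ S ∧ Countable S := by
  by_cases hM : Countable M
  · exact ⟨⊤, fun x _ => trivial, inferInstance⟩
  have : Infinite M := not_finite_iff_infinite.1 fun h => hM h.to_countable
  obtain ⟨S, hsS, hS⟩ := exists_elementarySubstructure_card_eq L s Cardinal.aleph0.{0} le_rfl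
    (by simpa using hs.le_aleph0)
    (by simp only [Cardinal.lift_aleph0, Cardinal.lift_le_aleph0]; exact Cardinal.mk_le_aleph0)
    (by simp)
  exact ⟨S, hsS, Cardinal.mk_le_aleph0_iff.1 (by simpa using hS.le)⟩

theorem exists_exTypeLE_of_not_models [Countable L.Symbols] {K : Type*} [L.Structure K]
    [Nonempty K] {φ : L.Sentence} {B : ℕ} {c : Fin B → K}
    (h : ∀ u : ExForm L (Fin B), ¬ u.Realize c → ¬ ({u.existsNot} : L.Theory) ⊨ᵇ φ) :
    ∃ (N : Type (max u v)) (_ : L.Structure N) (_ : Nonempty N) (a : Fin B → N),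
      ¬ N ⊨ φ ∧ ExTypeLE L a c := by
  obtain ⟨ef, hef⟩ := (Set.to_countable {u : ExForm L (Fin B) | ¬ u.Realize c}).exists_eq_range
    ⟨.ofQF ⊥ BoundedFormula.isQF_bot, by simp [ExForm.realize_ofQF]⟩
  have hefc (j : ℕ) : ¬ (ef j).Realize c := by
    have hj := Set.mem_range_self (f := ef) j
    rwa [← hef] at hj
  let u (j : ℕ) := ExForm.listOr ((List.range (j + 1)).map ef)
  have hu (j : ℕ) : ¬ (u j).Realize c := by
    rw [ExForm.realize_listOr]
    rintro ⟨p, hp, hpc⟩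
    obtain ⟨j', -, rfl⟩ := List.mem_map.1 hp
    exact hefc j' hpc
  have hcounter (j : ℕ) := not_forall.1 (mt Theory.models_sentence_iff.2 (h (u j) (hu j)))
  choose G hGφ using hcounter
  have hwit (j : ℕ) :=
    (ExForm.realize_existsNot (u j)).1 (Theory.model_singleton_iff.1 (G j).is_model)
  choose x hx using hwit
  let P := ((hyperfilter ℕ : Ultrafilter ℕ) : Filter ℕ).Product fun j => G j
  refine ⟨P, inferInstance, inferInstance, fun i => ((fun j => x j i : ∀ j, G j) : P),
    fun hP => ?_, fun p hp => by_contra fun hpc => ?_⟩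
  · obtain ⟨j, hj⟩ := ((Ultraproduct.sentence_realize φ).1 hP).exists
    exact hGφ j hj
  obtain ⟨j₀, rfl⟩ : p ∈ Set.range ef := hef ▸ hpc
  have hreal := (Ultraproduct.realize_formula_cast (ef j₀).toFormula fun i j => x j i).1
    ((ExForm.realize_toFormula _ _).2 hp)
  have hge : ∀ᶠ j in ((hyperfilter ℕ : Ultrafilter ℕ) : Filter ℕ), j₀ ≤ j :=
    hyperfilter_le_cofinite (by rw [Nat.cofinite_eq_atTop]; exact eventually_ge_atTop j₀)
  obtain ⟨j, hj, hj₀⟩ := (hreal.and hge).exists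
  exact hx j ((ExForm.realize_listOr _ _).2 ⟨ef j₀,
    List.mem_map.2 ⟨j₀, List.mem_range.2 (Nat.lt_succ_of_le hj₀), rfl⟩,
    (ExForm.realize_toFormula _ _).1 hj⟩)

theorem exists_countable_exTypeLE_of_not_models [Countable L.Symbols] {K : Type*}
    [L.Structure K] [Nonempty K] {φ : L.Sentence} {B : ℕ} {c : Fin B → K}
    (h : ∀ u : ExForm L (Fin B), ¬ u.Realize c → ¬ ({u.existsNot} : L.Theory) ⊨ᵇ φ) :
    ∃ (V : Type (max u v)) (_ : L.Structure V) (_ : Countable V) (_ : Nonempty V)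
      (a : Fin B → V), ¬ V ⊨ φ ∧ ExTypeLE L a c := by
  obtain ⟨N, _, _, a, hNφ, ha⟩ := exists_exTypeLE_of_not_models h
  obtain ⟨S, hS, hScount⟩ :=
    exists_countable_elementarySubstructure (L := L) (Set.countable_range a)
  exact ⟨S, inferInstance, hScount, inferInstance, fun i => ⟨a i, hS ⟨i, rfl⟩⟩,
    fun hSφ => hNφ ((S.realize_sentence φ).1 hSφ),
    fun p hp => ha p ((ExForm.realize_comp_elementaryEmbedding S.subtype p _).2 hp)⟩

theorem exists_fin_subset_range {X : Type*} [Nonempty X] {B : ℕ} (C : Finset X)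
    (hC : C.card ≤ B) : ∃ c : Fin B → X, ↑C ⊆ Set.range c := by
  refine ⟨fun i => C.toList[(i : ℕ)]?.getD (Classical.arbitrary X), fun x hx => ?_⟩
  obtain ⟨i, hi, rfl⟩ := List.mem_iff_getElem.1 (Finset.mem_toList.2 hx)
  exact ⟨⟨i, (C.length_toList ▸ hi).trans_le hC⟩, by simp [List.getElem?_eq_getElem hi]⟩

theorem exists_existsNot_of_psc [Countable L.Symbols] {φ : L.Sentence} {B : ℕ} (h : PSC φ B)
    (M : Type (max u v)) [L.Structure M] [Nonempty M] (hM : M ⊨ φ) :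
    ∃ u : ExForm L (Fin B), M ⊨ u.existsNot ∧ ({u.existsNot} : L.Theory) ⊨ᵇ φ := by
  let Mω := ((hyperfilter ℕ : Ultrafilter ℕ) : Filter ℕ).Product fun _ : ℕ => M
  have hlos (ψ : L.Sentence) : Mω ⊨ ψ ↔ M ⊨ ψ :=
    (Ultraproduct.sentence_realize ψ).trans eventually_const
  obtain ⟨C, hCcard, hCcore⟩ := h Mω ((hlos φ).2 hM)
  obtain ⟨c, hc⟩ := exists_fin_subset_range C hCcard
  suffices ∃ u : ExForm L (Fin B), ¬ u.Realize c ∧ ({u.existsNot} : L.Theory) ⊨ᵇ φ by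
    obtain ⟨u, huc, hu⟩ := this
    exact ⟨u, (hlos _).1 ((ExForm.realize_existsNot u).2 ⟨c, huc⟩), hu⟩
  by_contra! hbad
  obtain ⟨V, _, _, _, a, hVφ, ha⟩ := exists_countable_exTypeLE_of_not_models hbad
  obtain ⟨g, hg⟩ := exists_embedding_ultraproduct hyperfilter_le_cofinite ha
  have hCg : (C : Set Mω) ⊆ g.toHom.range := fun y hy => by
    obtain ⟨i, rfl⟩ := hc hy
    exact ⟨a i, congrFun hg i⟩
  exact hVφ ((StrongHomClass.realize_sentence g.equivRange φ).2
    (hCcore _ hCg ⟨g.equivRange (Classical.arbitrary V)⟩))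

theorem exists_existsNot_iff_of_psc [Countable L.Symbols] {φ : L.Sentence} {B : ℕ}
    (h : PSC φ B) : ∃ u : ExForm L (Fin B),
      ∀ (M : Type*) [L.Structure M] [Nonempty M], M ⊨ φ ↔ M ⊨ u.existsNot := by
  classical
  let good := {u : ExForm L (Fin B) | ({u.existsNot} : L.Theory) ⊨ᵇ φ}
  have hgood : (fun u : ExForm L (Fin B) => u.existsNot.not) '' good ⊨ᵇ φ.not :=
    Theory.models_sentence_iff.2 fun N hNφ => by
      obtain ⟨u, hNu, hu⟩ := exists_existsNot_of_psc h N hNφ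
      exact N.is_model.realize_of_mem _ ⟨u, hu, rfl⟩ hNu
  obtain ⟨T₀, hT₀, hT₀φ⟩ := Theory.models_iff_finset_models.1 hgood
  obtain ⟨s, hs, rfl⟩ := Finset.subset_set_image_iff.1 hT₀
  refine ⟨ExForm.listAnd s.toList, fun M _ _ => ?_⟩
  simp only [ExForm.realize_existsNot, ExForm.realize_listAnd, Finset.mem_toList, not_forall]
  constructor
  · intro hM
    by_contra! hall
    have : M ⊨ (↑(s.image fun u => u.existsNot.not) : L.Theory) :=
      Theory.model_iff _ |>.2 fun ψ hψ => by
        obtain ⟨u, hu, rfl⟩ := Finset.mem_image.1 hψ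
        simpa [ExForm.realize_existsNot] using fun xs => hall xs u hu
    exact hT₀φ.realize_sentence M hM
  · rintro ⟨xs, u, hu, hux⟩
    have : M ⊨ ({u.existsNot} : L.Theory) :=
      Theory.model_singleton_iff.2 ((ExForm.realize_existsNot u).2 ⟨xs, hux⟩)
    exact (hs hu).realize_sentence M

/-- Over the class 𝒞 of disjoint unions of oriented paths: for every `B ∈ ℕ`, an FO sentence
`φ` with `φ ∈ PSC(B)` is equivalent over 𝒞 to a sentence of the form `∃x₁…x_B ∀y₁…y_n β`
with `β` quantifier-free. -/
theorem statement14 (B : ℕ) (φ : Language.graph.Sentence) (h : PSC φ B) :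
    ∃ (n : ℕ) (β : Language.graph.BoundedFormula Empty (B + n)), β.IsQF ∧
      ∀ (M : Type) [Language.graph.Structure M] [Nonempty M], InDirPaths M →
        (M ⊨ φ ↔ M ⊨ sigma2 B n β) := by
  obtain ⟨u, hu⟩ := exists_existsNot_iff_of_psc h
  exact ⟨u.n, boundAll u.matrix.not, isQF_boundAll u.isQF.not, fun M _ _ _ => hu M⟩

end Stmt
end

section
/- Let τ be a purely relational vocabulary (predicate symbols only) and let φ = ∃x₁…∃x_k ∀y ψ(x₁,…,x_k,y) with ψ quantifier-free, where no existentially quantified variable x_i is compared with the universally quantified variable y using equality in ψ. If φ is preserved under substructures, then φ is logically equivalent to the condition that every substructure induced on at most n elements satisfies φ, where n = 2^{|τ|}. -/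
open FirstOrder Language

universe u v

namespace Stmt

variable {L : FirstOrder.Language.{u, v}}

/-- The quantifier rank of a bounded formula: the maximum depth of nesting of quantifiers. -/
def qr {α : Type*} : ∀ {n : ℕ}, L.BoundedFormula α n → ℕ
  | _, .falsum => 0
  | _, .equal _ _ => 0
  | _, .rel _ _ => 0
  | _, .imp f g => max (qr f) (qr g)
  | _, .all f => qr f + 1

/-- The vocabulary consisting of `k` unary predicate symbols (and nothing else). -/
def unaryLang (k : ℕ) : FirstOrder.Language :=
  ⟨fun _ => Empty, fun n => if n = 1 then Fin k else Empty⟩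

/-- `φ` is preserved under substructures: every (nonempty) substructure of every model of `φ`
satisfies `φ`. -/
def PS (φ : L.Sentence) : Prop :=
  ∀ (M : Type max u v) [L.Structure M] [Nonempty M], M ⊨ φ →
    ∀ N : L.Substructure M, (N : Set M).Nonempty → ↥N ⊨ φ

/-- The term `t` uses the variable `a`. -/
def UsesVar {γ : Type*} (a : γ) : L.Term γ → Prop
  | .var b => a = b
  | .func _ ts => ∃ i, UsesVar a (ts i)

/-- No equality atom of the formula compares the variable of index `k` (the universally
quantified variable) with a variable of index `< k` (an existentially quantified variable). -/
def NoEqAcross (k : ℕ) : ∀ {m : ℕ}, L.BoundedFormula Empty m → Prop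
  | _, .falsum => True
  | m, .equal t₁ t₂ =>
      ∀ (h : k < m) (i : Fin m), (i : ℕ) < k →
        ¬ ((UsesVar (Sum.inr ⟨k, h⟩) t₁ ∧ UsesVar (Sum.inr i) t₂) ∨
           (UsesVar (Sum.inr ⟨k, h⟩) t₂ ∧ UsesVar (Sum.inr i) t₁))
  | _, .rel _ _ => True
  | _, .imp f g => NoEqAcross k f ∧ NoEqAcross k g
  | _, .all f => NoEqAcross k f

/-! Only `⇐` needs an argument. Call the set of relation symbols `R` with `R(a, …, a)` the
diagonal type of `a`; there are at most `2 ^ |τ|` diagonal types, so representatives of all of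
them generate a substructure `N ⊨ φ`, with witnesses `x̄ ∈ N`. Graft `N` onto `M`: on `M ⊔ N`
keep the relations of `M` and of `N`, and read a tuple that meets `N` and a single element `a`
of `M` as the tuple of `N` with `a` replaced by its representative. Since `ψ` never compares `y`
with the `xᵢ`, every instance `ψ(x̄, y)` in the graft is an instance `ψ(x̄, y')` in `N`. So the
graft satisfies `φ`, and so does `M`, a substructure of the graft, by preservation. -/

open Structure

theorem realize_all_exs_iff {M : Type*} [L.Structure M] {k : ℕ}
    {ψ : L.BoundedFormula Empty (k + 1)} :
    M ⊨ ψ.all.exs ↔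
      ∃ x : Fin k → M, ∀ y : M, ψ.Realize default (Fin.snoc x y : Fin (k + 1) → M) := by
  simp only [Sentence.Realize, BoundedFormula.realize_exs, BoundedFormula.realize_all]

theorem PS.realize_of_embedding {φ : L.Sentence} (hφ : PS φ) {M P : Type max u v}
    [L.Structure M] [L.Structure P] [Nonempty M] (f : M ↪[L] P) (hP : P ⊨ φ) : M ⊨ φ := by
  have : Nonempty P := Nonempty.map f inferInstance
  have hrange := hφ P hP f.toHom.range ⟨_, f.toHom.mem_range_self (Classical.arbitrary M)⟩
  exact (StrongHomClass.realize_sentence f.equivRange φ).2 hrange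

def SameDiagType {M N : Type*} [L.Structure M] [L.Structure N] (a : M) (b : N) : Prop :=
  ∀ {l} (R : L.Relations l), RelMap R (fun _ : Fin l => a) ↔ RelMap R (fun _ : Fin l => b)

theorem exists_sameDiagType_representatives [Finite L.Symbols] (M : Type*) [L.Structure M]
    [Nonempty M] :
    ∃ b : Fin (2 ^ Nat.card L.Symbols) → M, ∀ a : M, ∃ i, SameDiagType (L := L) a (b i) := by
  let diagType : M → L.Symbols → Prop :=
    fun a => Sum.elim (fun _ => False) (fun R => RelMap R.2 (fun _ => a))
  have hcard : Nat.card (L.Symbols → Prop) = 2 ^ Nat.card L.Symbols := by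
    rw [Nat.card_fun, Nat.card_congr Equiv.propEquivBool, Nat.card_eq_fintype_card,
      Fintype.card_bool]
  let e := Finite.equivFinOfCardEq hcard
  refine ⟨Function.invFun diagType ∘ e.symm, fun a => ⟨e (diagType a), fun R => ?_⟩⟩
  have h := Function.invFun_eq (f := diagType) ⟨a, rfl⟩
  simp only [Function.comp_apply, Equiv.symm_apply_apply]
  exact iff_of_eq (congrFun h (Sum.inr ⟨_, R⟩)).symm

section Relational

variable [L.IsRelational]

def Term.boundVarIndex {m : ℕ} : L.Term (Empty ⊕ Fin m) → Fin m
  | .var (Sum.inl e) => e.elim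
  | .var (Sum.inr p) => p
  | .func f _ => isEmptyElim f

theorem Term.var_boundVarIndex {m : ℕ} (t : L.Term (Empty ⊕ Fin m)) :
    Term.var (Sum.inr (boundVarIndex t)) = t := by
  match t with
  | .var (Sum.inl e) => exact e.elim
  | .var (Sum.inr _) => rfl
  | .func f _ => exact isEmptyElim f

theorem realize_snoc_iff_of_relMap_iff {M₁ M₂ : Type*} [L.Structure M₁] [L.Structure M₂]
    {k : ℕ} {ψ : L.BoundedFormula Empty (k + 1)} (hqf : ψ.IsQF) (hne : NoEqAcross k ψ)
    {x₁ : Fin k → M₁} {y₁ : M₁} {x₂ : Fin k → M₂} {y₂ : M₂}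
    (heq : ∀ i j, x₁ i = x₁ j ↔ x₂ i = x₂ j)
    (hrel : ∀ {l} (R : L.Relations l) (t : Fin l → Fin (k + 1)),
      RelMap R ((Fin.snoc x₁ y₁ : Fin (k + 1) → M₁) ∘ t) ↔
        RelMap R ((Fin.snoc x₂ y₂ : Fin (k + 1) → M₂) ∘ t)) :
    ψ.Realize default (Fin.snoc x₁ y₁ : Fin (k + 1) → M₁) ↔
      ψ.Realize default (Fin.snoc x₂ y₂ : Fin (k + 1) → M₂) := by
  induction hqf with
  | falsum => exact Iff.rfl
  | of_isAtomic h =>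
    cases h with
    | equal t₁ t₂ =>
      rw [← Term.var_boundVarIndex t₁, ← Term.var_boundVarIndex t₂] at hne ⊢
      show Term.realize _ _ = Term.realize _ _ ↔ Term.realize _ _ = Term.realize _ _
      simp only [Term.realize_var, Sum.elim_inr]
      generalize Term.boundVarIndex t₁ = p, Term.boundVarIndex t₂ = q at hne ⊢
      induction p using Fin.lastCases <;> induction q using Fin.lastCases
      · simp only
      -- the two remaining mixed cases would compare `y` with some `xᵢ`
      · exact absurd (Or.inl ⟨rfl, rfl⟩) (hne k.lt_add_one _ (Fin.castSucc_lt_last _))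
      · exact absurd (Or.inr ⟨rfl, rfl⟩) (hne k.lt_add_one _ (Fin.castSucc_lt_last _))
      · simpa only [Fin.snoc_castSucc] using heq _ _
    | rel R ts =>
      have hts : ts = fun i => Term.var (Sum.inr (Term.boundVarIndex (ts i))) :=
        funext fun i => (Term.var_boundVarIndex (ts i)).symm
      rw [hts]
      exact hrel R _
  | imp _ _ ihf ihg =>
    obtain ⟨hnef, hneg⟩ := hne
    exact imp_congr (ihf hnef) (ihg hneg)

end Relational

section Graft

variable {M N : Type*} [L.Structure M] [L.Structure N]

def Graft (_ : M → N) : Type _ := M ⊕ N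

variable (r : M → N)

def Graft.collapse : Graft r → N := Sum.elim r id

variable [L.IsRelational]

instance : L.Structure (Graft r) where
  funMap f _ := isEmptyElim f
  RelMap R v := (∃ w, v = Sum.inl ∘ w ∧ RelMap R w) ∨
    ((∃ i, (v i).isRight) ∧ (∀ i j, (v i).isLeft → (v j).isLeft → v i = v j) ∧
      RelMap R (Graft.collapse r ∘ v))

theorem Graft.relMap_inl {l : ℕ} (R : L.Relations l) (w : Fin l → M) :
    RelMap R (Sum.inl ∘ w : Fin l → Graft r) ↔ RelMap R w := by
  constructor
  · rintro (⟨w', hw', h⟩ | ⟨⟨i, hi⟩, -⟩)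
    · rwa [Sum.inl_injective.comp_left hw']
    · cases hi
  · exact fun h => Or.inl ⟨w, rfl, h⟩

def Graft.inlEmbedding : M ↪[L] Graft r where
  toFun := Sum.inl
  inj' := Sum.inl_injective
  map_fun' f := isEmptyElim f
  map_rel' R w := Graft.relMap_inl r R w

theorem Graft.relMap_iff_of_exists_isRight {l : ℕ} (R : L.Relations l) {v : Fin l → Graft r}
    (hv : ∃ i, (v i).isRight) :
    RelMap R v ↔
      (∀ i j, (v i).isLeft → (v j).isLeft → v i = v j) ∧ RelMap R (Graft.collapse r ∘ v) := by
  refine ⟨?_, fun h => Or.inr ⟨hv, h⟩⟩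
  rintro (⟨w, rfl, -⟩ | ⟨-, h⟩)
  · obtain ⟨i, hi⟩ := hv
    cases hi
  · exact h

variable {r}

theorem Graft.relMap_iff [Nonempty M] (hr : ∀ a, SameDiagType (L := L) a (r a))
    {l : ℕ} (R : L.Relations l) {v : Fin l → Graft r}
    (hv : ∀ i j, (v i).isLeft → (v j).isLeft → v i = v j) :
    RelMap R v ↔ RelMap R (Graft.collapse r ∘ v) := by
  by_cases hleft : ∀ i, (v i).isLeft
  · obtain ⟨a, rfl⟩ : ∃ a : M, v = Sum.inl ∘ fun _ => a := by
      rcases isEmpty_or_nonempty (Fin l) with hl | ⟨⟨i₀⟩⟩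
      -- for nullary relations `hr` is used at an arbitrary point of `M`
      · exact ⟨Classical.arbitrary M, funext isEmptyElim⟩
      · obtain ⟨a, ha⟩ := Sum.isLeft_iff.1 (hleft i₀)
        exact ⟨a, funext fun i => (hv i i₀ (hleft i) (hleft i₀)).trans ha⟩
    exact (relMap_inl r R _).trans (hr a R)
  · obtain ⟨i, hi⟩ := not_forall.1 hleft
    rw [relMap_iff_of_exists_isRight r R ⟨i, Sum.not_isLeft.1 hi⟩]
    exact and_iff_right hv

theorem Graft.realize_snoc_inr_comp [Nonempty M] {k : ℕ} {ψ : L.BoundedFormula Empty (k + 1)}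
    (hqf : ψ.IsQF) (hne : NoEqAcross k ψ) (hr : ∀ a, SameDiagType (L := L) a (r a))
    {x : Fin k → N} (hx : ∀ y : N, ψ.Realize default (Fin.snoc x y : Fin (k + 1) → N))
    (y : Graft r) :
    ψ.Realize default (Fin.snoc (Sum.inr ∘ x : Fin k → Graft r) y : Fin (k + 1) → Graft r) := by
  set z : Fin (k + 1) → Graft r := Fin.snoc (Sum.inr ∘ x) y
  have hz_left : ∀ p, (z p).isLeft → z p = y := by
    intro p
    induction p using Fin.lastCases with
    | last => simp [z]
    | cast i =>
      simp only [z, Fin.snoc_castSucc]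
      intro h
      cases h
  have hz_elim : Graft.collapse r ∘ z = Fin.snoc x (Graft.collapse r y) := by
    rw [Fin.comp_snoc]
    rfl
  refine (realize_snoc_iff_of_relMap_iff hqf hne (fun i j => ?_) (fun R t => ?_)).1
    (hx (Graft.collapse r y))
  · exact Sum.inr_injective.eq_iff.symm
  · rw [relMap_iff hr R (v := z ∘ t) fun i j hi hj => (hz_left _ hi).trans (hz_left _ hj).symm,
      ← Function.comp_assoc, hz_elim]

end Graft

/-- Let `τ` be a purely relational vocabulary and `φ = ∃x₁…x_k ∀y ψ(x₁,…,x_k,y)` with `ψ`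
quantifier-free, where no existentially quantified variable is compared with the universally
quantified variable using equality in `ψ`. If `φ` is preserved under substructures, then `φ`
is logically equivalent to the condition that every substructure induced on at most `n`
elements satisfies `φ`, where `n = 2^{|τ|}`. -/
theorem statement19 (L : FirstOrder.Language.{u, v}) [L.IsRelational] [Finite L.Symbols]
    (k : ℕ) (ψ : L.BoundedFormula Empty (k + 1)) (hqf : ψ.IsQF)
    (hne : NoEqAcross k ψ) (hps : PS ψ.all.exs) :
    ∀ (M : Type max u v) [L.Structure M] [Nonempty M],
      M ⊨ ψ.all.exs ↔
        ∀ b : Fin (2 ^ Nat.card L.Symbols) → M,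
          ↥(Substructure.closure L (Set.range b)) ⊨ ψ.all.exs := by
  intro M _ _
  refine ⟨fun hM b => hps M hM _ ((Set.range_nonempty b).mono Substructure.subset_closure),
    fun H => ?_⟩
  obtain ⟨b, hb⟩ := exists_sameDiagType_representatives (L := L) M
  choose i hi using hb
  let N := Substructure.closure L (Set.range b)
  let r : M → N := fun a => ⟨b (i a), Substructure.subset_closure (Set.mem_range_self _)⟩
  obtain ⟨x, hx⟩ := realize_all_exs_iff.1 (H b)
  have hgraft : Graft r ⊨ ψ.all.exs :=
    realize_all_exs_iff.2 ⟨Sum.inr ∘ x, Graft.realize_snoc_inr_comp hqf hne (r := r) hi hx⟩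
  exact hps.realize_of_embedding (Graft.inlEmbedding r) hgraft

end Stmt
end
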